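/- arXiv:1603.03830 — 3 statements merged into one kernel-verified Lean document; each statement's English description precedes it below -/
import Mathlib

section
/- Truncation lemma: let ξ₁, ξ₂, … be i.i.d. real random variables with E|ξ₁|^r < ∞ for some r > 0. Then there exists a sequence of positive numbers (η_n) with η_n → 0 as n → ∞ such that P(A_n infinitely often) = 0, where A_n is the event that there exists an index i with 1 ≤ i ≤ n and |ξ_i| > η_n·n^{1/r}; equivalently, almost surely, for all sufficiently large n one has max_{1 ≤ i ≤ n} |ξ_i| ≤ η_n·n^{1/r}. -/
open MeasureTheory ProbabilityTheory Filter
open scoped Topology ENNReal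

/-!
Write `A_n(t) = {max_{1 ≤ i ≤ n} |ξ_i| > t n^{1/r}}`. Since `E|ξ₁|^r < ∞`, for every `t > 0` the
tails `P(|ξ₁| > t n^{1/r})` are summable, so by Borel–Cantelli and identical distribution
`|ξ_n| ≤ t n^{1/r}` for all large `n`, almost surely; as `n^{1/r}` increases to infinity, the same
holds for `max_{i ≤ n} |ξ_i|`, i.e. `P(A_n(t) i.o.) = 0`. A diagonal argument produces a single
sequence `η_n → 0`: choose `m_k` with `P(⋃_{n ≥ m_k} A_n(1/(k+1))) < δ_k` for a summable `δ`, let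
`η_n = 1/(k+1)` for the largest `k ≤ n` with `m_k ≤ n`, and apply Borel–Cantelli once more, to the
events `⋃_{n ≥ m_k} A_n(1/(k+1))`.
-/

lemma eventually_forall_le_of_eventually_le {a b : ℕ → ℝ} (hb_mono : Monotone b)
    (hb_tendsto : Tendsto b atTop atTop) (hab : ∀ᶠ i in atTop, a i ≤ b i) :
    ∀ᶠ n in atTop, ∀ i ≤ n, a i ≤ b n := by
  obtain ⟨N, hN⟩ := eventually_atTop.1 hab
  obtain ⟨C, hC⟩ := ((Finset.range N).finite_toSet.image a).bddAbove
  filter_upwards [eventually_ge_atTop N, hb_tendsto.eventually_ge_atTop C] with n hNn hCn i hin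
  rcases lt_or_ge i N with hiN | hNi
  · exact (hC ⟨i, Finset.mem_range.2 hiN, rfl⟩).trans hCn
  · exact (hN i hNi).trans (hb_mono hin)

section

variable {Ω : Type*} [MeasurableSpace Ω] {μ : Measure Ω}

lemma tendsto_measure_biUnion_Ici_zero_of_measure_limsup_eq_zero [IsFiniteMeasure μ]
    {s : ℕ → Set Ω} (hs : ∀ n, MeasurableSet (s n)) (h : μ (limsup s atTop) = 0) :
    Tendsto (fun m => μ (⋃ n ≥ m, s n)) atTop (𝓝 0) := by
  rw [limsup_eq_iInf_iSup_of_nat] at h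
  refine h ▸ tendsto_measure_iInter_atTop (fun m => (MeasurableSet.biUnion
    (Set.to_countable _) fun n _ => hs n).nullMeasurableSet) ?_ ⟨0, measure_ne_top μ _⟩
  exact fun m m' hmm' => Set.biUnion_subset_biUnion_left fun n hn => le_trans hmm' hn

lemma exists_tendsto_zero_measure_limsup_eq_zero [IsFiniteMeasure μ] {E : ℕ → ℝ → Set Ω}
    (hE : ∀ n t, MeasurableSet (E n t)) (hnull : ∀ t, 0 < t → μ (limsup (E · t) atTop) = 0) :
    ∃ η : ℕ → ℝ, (∀ n, 0 < η n) ∧ Tendsto η atTop (𝓝 0) ∧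
      μ (limsup (fun n => E n (η n)) atTop) = 0 := by
  obtain ⟨δ, hδ_pos, hδ_sum⟩ := ENNReal.exists_pos_sum_of_countable' one_ne_zero ℕ
  have hm : ∀ k : ℕ, ∃ m, μ (⋃ n ≥ m, E n (1 / (k + 1))) < δ k := fun k =>
    ((tendsto_measure_biUnion_Ici_zero_of_measure_limsup_eq_zero (fun n => hE n _)
      (hnull _ Nat.one_div_pos_of_nat)).eventually (gt_mem_nhds (hδ_pos k))).exists
  choose m hm using hm
  set κ : ℕ → ℕ := fun n => Nat.findGreatest (fun k => m k ≤ n) n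
  have hκ_tendsto : Tendsto κ atTop atTop := tendsto_atTop_atTop.2 fun K =>
    ⟨max K (m K), fun n hn => Nat.le_findGreatest (le_of_max_le_left hn) (le_of_max_le_right hn)⟩
  have hκ_spec : ∀ n, 0 < κ n → m (κ n) ≤ n := fun n h =>
    Nat.findGreatest_of_ne_zero (m := κ n) rfl h.ne'
  refine ⟨fun n => 1 / (κ n + 1), fun n => Nat.one_div_pos_of_nat,
    tendsto_one_div_add_atTop_nhds_zero_nat.comp hκ_tendsto, ?_⟩
  have hsum : ∑' k, μ (⋃ n ≥ m k, E n (1 / (k + 1))) ≠ ∞ :=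
    ne_top_of_le_ne_top (hδ_sum.trans ENNReal.one_lt_top).ne
      (ENNReal.tsum_le_tsum fun k => (hm k).le)
  refine measure_mono_null (fun ω hω => ?_) (measure_limsup_atTop_eq_zero hsum)
  rw [mem_limsup_iff_frequently_mem] at hω ⊢
  refine frequently_atTop.2 fun K => ?_
  obtain ⟨n, hωn, hn⟩ := (hω.and_eventually (hκ_tendsto.eventually_ge_atTop (max K 1))).exists
  exact ⟨κ n, le_of_max_le_left hn,
    Set.mem_biUnion (hκ_spec n (le_of_max_le_right hn)) hωn⟩

lemma tsum_measure_mul_rpow_lt_abs_ne_top [IsProbabilityMeasure μ] {X : Ω → ℝ} {r ε : ℝ}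
    (hr : 0 < r) (hε : 0 < ε) (hX : Integrable (fun ω => |X ω| ^ r) μ) :
    ∑' n : ℕ, μ {ω | ε * (n : ℝ) ^ (1 / r) < |X ω|} ≠ ∞ := by
  have hY := @tsum_prob_mem_Ioi_lt_top Ω ⟨μ⟩ ‹_› (fun ω => |X ω| ^ r / ε ^ r)
    (hX.div_const _) fun ω => by positivity
  refine ne_top_of_le_ne_top hY.ne (ENNReal.tsum_le_tsum fun n => measure_mono fun ω hω => ?_)
  have hεn : (ε * (n : ℝ) ^ (1 / r)) ^ r = ε ^ r * n := by
    rw [Real.mul_rpow hε.le (by positivity), ← Real.rpow_mul n.cast_nonneg,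
      one_div_mul_cancel hr.ne', Real.rpow_one]
  have hlt := Real.rpow_lt_rpow (by positivity) hω hr
  rw [hεn] at hlt
  exact (lt_div_iff₀' (by positivity)).2 hlt

lemma measure_limsup_exists_mul_rpow_lt_abs_eq_zero [IsProbabilityMeasure μ] {ξ : ℕ → Ω → ℝ}
    (hmeas : ∀ i, Measurable (ξ i)) (hident : ∀ i, μ.map (ξ i) = μ.map (ξ 1)) {r : ℝ} (hr : 0 < r)
    (hmom : Integrable (fun ω => |ξ 1 ω| ^ r) μ) {t : ℝ} (ht : 0 < t) :
    μ (limsup (fun n : ℕ => {ω | ∃ i, 1 ≤ i ∧ i ≤ n ∧ t * (n : ℝ) ^ (1 / r) < |ξ i ω|})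
      atTop) = 0 := by
  have hsame : ∀ (i : ℕ) (s : ℝ), μ {ω | s < |ξ i ω|} = μ {ω | s < |ξ 1 ω|} := fun i s =>
    IdentDistrib.measure_mem_eq ⟨(hmeas i).aemeasurable, (hmeas 1).aemeasurable, hident i⟩
      (measurableSet_lt measurable_const measurable_abs)
  have hsum : ∑' i : ℕ, μ {ω | t * (i : ℝ) ^ (1 / r) < |ξ i ω|} ≠ ∞ := by
    simpa only [hsame] using tsum_measure_mul_rpow_lt_abs_ne_top hr ht hmom
  have hb_mono : Monotone fun n : ℕ => t * (n : ℝ) ^ (1 / r) := fun m n hmn =>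
    mul_le_mul_of_nonneg_left
      (Real.rpow_le_rpow m.cast_nonneg (Nat.cast_le.2 hmn) (by positivity)) ht.le
  have hb_tendsto : Tendsto (fun n : ℕ => t * (n : ℝ) ^ (1 / r)) atTop atTop :=
    ((tendsto_rpow_atTop (by positivity)).comp tendsto_natCast_atTop_atTop).const_mul_atTop ht
  rw [measure_eq_zero_iff_ae_notMem]
  filter_upwards [ae_eventually_notMem hsum] with ω hω
  rw [mem_limsup_iff_frequently_mem, not_frequently]
  filter_upwards [eventually_forall_le_of_eventually_le hb_mono hb_tendsto
    (hω.mono fun i hi => not_lt.1 hi)] with n hn ⟨i, _, hin, hlt⟩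
  exact (hn i hin).not_gt hlt

end

theorem truncation_lemma_general
    {Ω : Type*} [MeasurableSpace Ω] (μ : Measure Ω) [IsProbabilityMeasure μ]
    (ξ : ℕ → Ω → ℝ)
    (hmeas : ∀ i, Measurable (ξ i))
    (hident : ∀ i, μ.map (ξ i) = μ.map (ξ 1))
    (r : ℝ) (hr : 0 < r)
    (hmom : Integrable (fun ω => |ξ 1 ω| ^ r) μ) :
    ∃ η : ℕ → ℝ, (∀ n, 0 < η n) ∧ Tendsto η atTop (𝓝 0) ∧
      μ (Filter.limsup
          (fun n => {ω | ∃ i, 1 ≤ i ∧ i ≤ n ∧ η n * (n : ℝ) ^ (1 / r) < |ξ i ω|})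
          atTop) = 0 :=
  exists_tendsto_zero_measure_limsup_eq_zero
    (E := fun n t => {ω | ∃ i, 1 ≤ i ∧ i ≤ n ∧ t * (n : ℝ) ^ (1 / r) < |ξ i ω|})
    (fun n t => by measurability)
    fun _ ht => measure_limsup_exists_mul_rpow_lt_abs_eq_zero hmeas hident hr hmom ht

/-- Truncation lemma: for i.i.d. real random variables `ξ₁, ξ₂, …` with `E|ξ₁|^r < ∞`
for some `r > 0`, there is a sequence of positive numbers `η_n → 0` such that almost
surely only finitely many of the events `{∃ i, 1 ≤ i ≤ n, |ξ_i| > η_n · n^{1/r}}` occur. -/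
theorem truncation_lemma
    {Ω : Type*} [MeasurableSpace Ω] (μ : Measure Ω) [IsProbabilityMeasure μ]
    (ξ : ℕ → Ω → ℝ)
    (hmeas : ∀ i, Measurable (ξ i))
    (hindep : iIndepFun ξ μ)
    (hident : ∀ i, μ.map (ξ i) = μ.map (ξ 1))
    (r : ℝ) (hr : 0 < r)
    (hmom : Integrable (fun ω => |ξ 1 ω| ^ r) μ) :
    ∃ η : ℕ → ℝ, (∀ n, 0 < η n) ∧ Tendsto η atTop (𝓝 0) ∧
      μ (Filter.limsup
          (fun n => {ω | ∃ i, 1 ≤ i ∧ i ≤ n ∧ η n * (n : ℝ) ^ (1 / r) < |ξ i ω|})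
          atTop) = 0 :=
  truncation_lemma_general μ ξ hmeas hident r hr hmom
end

section
/- Expectation of T₂: let ξ₁,…,ξₙ be i.i.d. real random variables with distribution symmetric about 0, E ξ₁² = 1 and M₄ := E ξ₁⁴ < ∞, and let A = (a_{ij}) be an n×n real matrix with B := AAᵀ. Then E[ n⁻¹·(Σ_{i=1}^n (Σ_{j=1}^n a_{ij} ξ_j)²)² ] = n⁻¹·( (tr B)² + 2·tr(B²) + ν₄·Σ_{j=1}^n ((AᵀA)_{jj})² ) = n⁻¹·( (tr B)² + 2·tr(B²) + ν₄·tr((AᵀA)∘(AᵀA)) ), where ν₄ := M₄ − 3. -/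
open MeasureTheory ProbabilityTheory Matrix
open scoped Matrix

/-!
With `C := AᵀA`, the inner sum is the quadratic form `∑ⱼₖ Cⱼₖ ξⱼ ξₖ`, so its square is a
combination of the mixed moments `E[ξⱼ ξₖ ξₗ ξₘ]`. By independence such a moment factors as
`∏ᵢ E[ξᵢ ^ eᵢ]`, where `eᵢ` counts the occurrences of `i` among `j, k, l, m`; odd moments vanish
by symmetry, which leaves `δⱼₖδₗₘ + δⱼₗδₖₘ + δⱼₘδₖₗ + ν₄ δⱼₖδₖₗδₗₘ`. Summing against `Cⱼₖ Cₗₘ`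
gives `(tr C)² + 2 tr(C²) + ν₄ ∑ⱼ Cⱼⱼ²`, and `tr C = tr B`, `tr C² = tr B²` by cyclicity of
the trace.
-/

section Combinatorics

variable {ι : Type*} [DecidableEq ι]

def indexCount (j k l m i : ι) : ℕ :=
  (if i = j then 1 else 0) + (if i = k then 1 else 0) + (if i = l then 1 else 0)
    + (if i = m then 1 else 0)

def fourthMomentTensor (ν : ℝ) (j k l m : ι) : ℝ :=
  (if j = k ∧ l = m then 1 else 0) + (if j = l ∧ k = m then 1 else 0)
    + (if j = m ∧ k = l then 1 else 0) + ν * (if j = k ∧ k = l ∧ l = m then 1 else 0)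

variable [Fintype ι]

lemma mul_mul_mul_eq_prod_pow_indexCount {M : Type*} [CommMonoid M] (x : ι → M)
    (j k l m : ι) : x j * x k * x l * x m = ∏ i, x i ^ indexCount j k l m i := by
  simp only [indexCount, pow_add, Finset.prod_mul_distrib, pow_ite, pow_one, pow_zero,
    Finset.prod_ite_eq', Finset.mem_univ, if_true]

lemma prod_apply_indexCount_eq_fourthMomentTensor (f : ι → ℕ → ℝ) (c : ℝ)
    (h0 : ∀ i, f i 0 = 1) (h1 : ∀ i, f i 1 = 0) (h2 : ∀ i, f i 2 = 1) (h3 : ∀ i, f i 3 = 0)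
    (h4 : ∀ i, f i 4 = c) (j k l m : ι) :
    ∏ i, f i (indexCount j k l m i) = fourthMomentTensor (c - 3) j k l m := by
  rw [← Finset.prod_subset (Finset.subset_univ {j, k, l, m})
    (fun i _ hi => by simp_all [indexCount])]
  -- both sides only depend on which of `j, k, l, m` coincide
  by_cases hjk : j = k <;> by_cases hjl : j = l <;> by_cases hjm : j = m <;>
    by_cases hkl : k = l <;> by_cases hkm : k = m <;> by_cases hlm : l = m <;>
    subst_vars <;>
    simp_all [indexCount, fourthMomentTensor, Finset.prod_insert, @eq_comm ι,
      show (1 : ℝ) + 1 + 1 + (c - 3) = c by ring]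

lemma sum_mul_mul_fourthMomentTensor (C : Matrix ι ι ℝ) (ν : ℝ) :
    ∑ j, ∑ k, ∑ l, ∑ m, C j k * C l m * fourthMomentTensor ν j k l m
      = C.trace ^ 2 + (C * Cᵀ).trace + (C * C).trace + ν * ∑ j, C j j ^ 2 := by
  simp [fourthMomentTensor, mul_add, Finset.sum_add_distrib, ite_and, Matrix.trace,
    Matrix.mul_apply, sq, Finset.mul_sum, mul_comm]

end Combinatorics

lemma sum_sq_sum_mul_eq {m n R : Type*} [Fintype m] [Fintype n] [CommSemiring R]
    (A : Matrix m n R) (x : n → R) :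
    ∑ i, (∑ j, A i j * x j) ^ 2 = ∑ j, ∑ k, (Aᵀ * A) j k * (x j * x k) := by
  calc ∑ i, (∑ j, A i j * x j) ^ 2 = ∑ i, ∑ j, ∑ k, A i j * A i k * (x j * x k) := by
        simp only [sq, Finset.sum_mul_sum]
        congr! 3
        ring
    _ = ∑ j, ∑ k, ∑ i, A i j * A i k * (x j * x k) := by
        rw [Finset.sum_comm]
        exact Finset.sum_congr rfl fun _ _ => Finset.sum_comm
    _ = ∑ j, ∑ k, (Aᵀ * A) j k * (x j * x k) := by
        simp only [Matrix.mul_apply, Matrix.transpose_apply, Finset.sum_mul]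

lemma sq_sum_sum_mul_eq {n R : Type*} [Fintype n] [CommSemiring R] (C : Matrix n n R)
    (x : n → R) :
    (∑ j, ∑ k, C j k * (x j * x k)) ^ 2
      = ∑ j, ∑ k, ∑ l, ∑ m, C j k * C l m * (x j * x k * x l * x m) := by
  simp only [sq, Finset.sum_mul, Finset.mul_sum]
  congr! 4 with j k l m
  ring

lemma abs_mul_mul_mul_le (a b c d : ℝ) :
    |a * b * c * d| ≤ (a ^ 4 + b ^ 4 + c ^ 4 + d ^ 4) / 4 := by
  have hab : |a * b| ≤ (a ^ 2 + b ^ 2) / 2 := by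
    rw [abs_mul]; nlinarith [sq_nonneg (|a| - |b|), sq_abs a, sq_abs b]
  have hcd : |c * d| ≤ (c ^ 2 + d ^ 2) / 2 := by
    rw [abs_mul]; nlinarith [sq_nonneg (|c| - |d|), sq_abs c, sq_abs d]
  rw [mul_assoc _ c, abs_mul]
  nlinarith [mul_le_mul hab hcd (abs_nonneg _) (by positivity), sq_nonneg (a ^ 2 - b ^ 2),
    sq_nonneg (c ^ 2 - d ^ 2), sq_nonneg (a ^ 2 + b ^ 2 - c ^ 2 - d ^ 2)]

section Moments

variable {Ω : Type*} [MeasurableSpace Ω] {μ : Measure Ω}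

lemma integral_pow_eq_zero_of_map_neg {X : Ω → ℝ} (hX : AEMeasurable X μ)
    (hsymm : μ.map X = μ.map (fun ω => -X ω)) {k : ℕ} (hk : Odd k) :
    ∫ ω, X ω ^ k ∂μ = 0 := by
  have h : ∫ ω, X ω ^ k ∂μ = -∫ ω, X ω ^ k ∂μ :=
    calc ∫ ω, X ω ^ k ∂μ = ∫ x, x ^ k ∂(μ.map X) :=
          (integral_map hX (continuous_pow k).aestronglyMeasurable).symm
      _ = ∫ x, x ^ k ∂(μ.map (fun ω => -X ω)) := by rw [hsymm]
      _ = ∫ ω, (-X ω) ^ k ∂μ := integral_map hX.neg (continuous_pow k).aestronglyMeasurable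
      _ = -∫ ω, X ω ^ k ∂μ := by simp_rw [hk.neg_pow, integral_neg]
  linarith

lemma integrable_mul_mul_mul {f g u v : Ω → ℝ} (hf : AEStronglyMeasurable f μ)
    (hg : AEStronglyMeasurable g μ) (hu : AEStronglyMeasurable u μ)
    (hv : AEStronglyMeasurable v μ) (hf4 : Integrable (fun ω => f ω ^ 4) μ)
    (hg4 : Integrable (fun ω => g ω ^ 4) μ) (hu4 : Integrable (fun ω => u ω ^ 4) μ)
    (hv4 : Integrable (fun ω => v ω ^ 4) μ) :
    Integrable (fun ω => f ω * g ω * u ω * v ω) μ :=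
  Integrable.mono' ((((hf4.add hg4).add hu4).add hv4).div_const 4)
    (((hf.mul hg).mul hu).mul hv) (ae_of_all _ fun _ => abs_mul_mul_mul_le _ _ _ _)

variable [IsProbabilityMeasure μ] {ι : Type*} [Fintype ι] [DecidableEq ι] {ξ : ι → Ω → ℝ}

lemma integral_mul_mul_mul_eq_fourthMomentTensor (hmeas : ∀ i, Measurable (ξ i))
    (hindep : iIndepFun ξ μ) (hsymm : ∀ i, μ.map (ξ i) = μ.map (fun ω => -ξ i ω))
    (hvar : ∀ i, ∫ ω, ξ i ω ^ 2 ∂μ = 1) {M4 : ℝ} (hM4 : ∀ i, ∫ ω, ξ i ω ^ 4 ∂μ = M4)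
    (j k l m : ι) :
    ∫ ω, ξ j ω * ξ k ω * ξ l ω * ξ m ω ∂μ = fourthMomentTensor (M4 - 3) j k l m := by
  have hodd : ∀ i k, Odd k → ∫ ω, ξ i ω ^ k ∂μ = 0 := fun i _ hk =>
    integral_pow_eq_zero_of_map_neg (hmeas i).aemeasurable (hsymm i) hk
  calc ∫ ω, ξ j ω * ξ k ω * ξ l ω * ξ m ω ∂μ
      = ∫ ω, ∏ i, ξ i ω ^ indexCount j k l m i ∂μ := by
        congr with ω; exact mul_mul_mul_eq_prod_pow_indexCount (ξ · ω) j k l m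
    _ = ∏ i, ∫ ω, ξ i ω ^ indexCount j k l m i ∂μ :=
        hindep.integral_fun_prod_comp (f := fun i x => x ^ indexCount j k l m i)
          (fun i => (hmeas i).aemeasurable) (fun _ => by fun_prop)
    _ = fourthMomentTensor (M4 - 3) j k l m :=
        prod_apply_indexCount_eq_fourthMomentTensor (fun i k => ∫ ω, ξ i ω ^ k ∂μ) M4
          (by simp) (fun i => hodd i 1 odd_one) hvar (fun i => hodd i 3 (by decide)) hM4 j k l m

lemma integral_sq_sum_sum_mul_eq (hmeas : ∀ i, Measurable (ξ i)) (hindep : iIndepFun ξ μ)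
    (hsymm : ∀ i, μ.map (ξ i) = μ.map (fun ω => -ξ i ω))
    (hvar : ∀ i, ∫ ω, ξ i ω ^ 2 ∂μ = 1) (hint4 : ∀ i, Integrable (fun ω => ξ i ω ^ 4) μ)
    {M4 : ℝ} (hM4 : ∀ i, ∫ ω, ξ i ω ^ 4 ∂μ = M4) (C : Matrix ι ι ℝ) :
    ∫ ω, (∑ j, ∑ k, C j k * (ξ j ω * ξ k ω)) ^ 2 ∂μ
      = ∑ j, ∑ k, ∑ l, ∑ m, C j k * C l m * fourthMomentTensor (M4 - 3) j k l m := by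
  have hint (j k l m : ι) : Integrable (fun ω => ξ j ω * ξ k ω * ξ l ω * ξ m ω) μ :=
    integrable_mul_mul_mul (hmeas j).aestronglyMeasurable (hmeas k).aestronglyMeasurable
      (hmeas l).aestronglyMeasurable (hmeas m).aestronglyMeasurable
      (hint4 j) (hint4 k) (hint4 l) (hint4 m)
  simp only [sq_sum_sum_mul_eq]
  simp only [← Fintype.sum_prod_type']
  rw [integral_finsetSum _ fun p _ => (hint _ _ _ _).const_mul _]
  simp only [integral_const_mul,
    integral_mul_mul_mul_eq_fourthMomentTensor hmeas hindep hsymm hvar hM4]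

end Moments

theorem expectation_T2_general
    {Ω : Type*} [MeasurableSpace Ω] (μ : Measure Ω) [IsProbabilityMeasure μ]
    {n : ℕ} (ξ : Fin n → Ω → ℝ)
    (hmeas : ∀ i, Measurable (ξ i))
    (hindep : iIndepFun ξ μ)
    (hsymm : ∀ i, μ.map (ξ i) = μ.map (fun ω => -ξ i ω))
    (hvar : ∀ i, ∫ ω, (ξ i ω) ^ 2 ∂μ = 1)
    (hint4 : ∀ i, Integrable (fun ω => (ξ i ω) ^ 4) μ)
    (M4 ν4 : ℝ)
    (hM4 : ∀ i, ∫ ω, (ξ i ω) ^ 4 ∂μ = M4)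
    (hν4 : ν4 = M4 - 3)
    (A B : Matrix (Fin n) (Fin n) ℝ) (hB : B = A * Aᵀ) :
    (∫ ω, (1 / (n : ℝ)) * (∑ i, (∑ j, A i j * ξ j ω) ^ 2) ^ 2 ∂μ)
        = (1 / (n : ℝ)) * (B.trace ^ 2 + 2 * (B * B).trace
            + ν4 * ∑ j, ((Aᵀ * A) j j) ^ 2)
    ∧ (∫ ω, (1 / (n : ℝ)) * (∑ i, (∑ j, A i j * ξ j ω) ^ 2) ^ 2 ∂μ)
        = (1 / (n : ℝ)) * (B.trace ^ 2 + 2 * (B * B).trace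
            + ν4 * ((Aᵀ * A) ⊙ (Aᵀ * A)).trace) := by
  subst hB hν4
  have htrace : (Aᵀ * A).trace = (A * Aᵀ).trace := trace_mul_comm _ _
  have htrace_sq : (Aᵀ * A * (Aᵀ * A)).trace = (A * Aᵀ * (A * Aᵀ)).trace := by
    rw [← Matrix.mul_assoc, trace_mul_comm, Matrix.mul_assoc, Matrix.mul_assoc]
  have hC_symm : (Aᵀ * A)ᵀ = Aᵀ * A := by rw [transpose_mul, transpose_transpose]
  have hhadamard : ((Aᵀ * A) ⊙ (Aᵀ * A)).trace = ∑ j, (Aᵀ * A) j j ^ 2 := by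
    simp only [trace, diag_apply, hadamard_apply, sq]
  have hE : ∫ ω, (1 / (n : ℝ)) * (∑ i, (∑ j, A i j * ξ j ω) ^ 2) ^ 2 ∂μ
      = (1 / (n : ℝ)) * ((A * Aᵀ).trace ^ 2 + 2 * (A * Aᵀ * (A * Aᵀ)).trace
          + (M4 - 3) * ∑ j, (Aᵀ * A) j j ^ 2) := by
    simp only [integral_const_mul, sum_sq_sum_mul_eq,
      integral_sq_sum_sum_mul_eq hmeas hindep hsymm hvar hint4 hM4,
      sum_mul_mul_fourthMomentTensor, hC_symm, htrace, htrace_sq]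
    ring
  exact ⟨hE, hhadamard ▸ hE⟩

/-- Expectation of `T₂ = n⁻¹(Σᵢ (Σⱼ aᵢⱼ ξⱼ)²)²` for i.i.d. symmetric `ξ` with unit variance and
fourth moment `M₄`:
`E T₂ = n⁻¹((tr B)² + 2·tr(B²) + ν₄·Σⱼ ((AᵀA)ⱼⱼ)²) = n⁻¹((tr B)² + 2·tr(B²) + ν₄·tr((AᵀA)∘(AᵀA)))`
where `B = AAᵀ` and `ν₄ = M₄ − 3`. -/
theorem expectation_T2
    {Ω : Type*} [MeasurableSpace Ω] (μ : Measure Ω) [IsProbabilityMeasure μ]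
    {n : ℕ} (ξ : Fin n → Ω → ℝ)
    (hmeas : ∀ i, Measurable (ξ i))
    (hindep : iIndepFun ξ μ)
    (hident : ∀ i j, μ.map (ξ i) = μ.map (ξ j))
    (hsymm : ∀ i, μ.map (ξ i) = μ.map (fun ω => -ξ i ω))
    (hvar : ∀ i, ∫ ω, (ξ i ω) ^ 2 ∂μ = 1)
    (hint4 : ∀ i, Integrable (fun ω => (ξ i ω) ^ 4) μ)
    (M4 ν4 : ℝ)
    (hM4 : ∀ i, ∫ ω, (ξ i ω) ^ 4 ∂μ = M4)
    (hν4 : ν4 = M4 - 3)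
    (A B : Matrix (Fin n) (Fin n) ℝ) (hB : B = A * Aᵀ) :
    (∫ ω, (1 / (n : ℝ)) * (∑ i, (∑ j, A i j * ξ j ω) ^ 2) ^ 2 ∂μ)
        = (1 / (n : ℝ)) * (B.trace ^ 2 + 2 * (B * B).trace
            + ν4 * ∑ j, ((Aᵀ * A) j j) ^ 2)
    ∧ (∫ ω, (1 / (n : ℝ)) * (∑ i, (∑ j, A i j * ξ j ω) ^ 2) ^ 2 ∂μ)
        = (1 / (n : ℝ)) * (B.trace ^ 2 + 2 * (B * B).trace
            + ν4 * ((Aᵀ * A) ⊙ (Aᵀ * A)).trace) :=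
  expectation_T2_general μ ξ hmeas hindep hsymm hvar hint4 M4 ν4 hM4 hν4 A B hB
end

section
/- Pairing-count identity: for all natural numbers s₁, s₂, s₃ with s := s₁ + s₂ + s₃, one has C(2s, 2s₁+s₃)·C(2s₁+s₃, s₃)·C(2s₂+s₃, s₃)·(2s₁−1)!!·(2s₂−1)!!·s₃!·(s₁!·s₂!·s₃!) = (2s−1)!!·2^{s₃}·s!, where C(n,k) denotes the binomial coefficient and (2k−1)!! the double factorial of 2k−1 (with (−1)!! := 1). -/
open Nat
open scoped Nat

/-! Multiplying both sides by `2 ^ (s₁ + s₂)` turns each `(2k - 1)‼ * 2 ^ k * k !` into `(2k)!`.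
With `a = 2s₁ + s₃` and `b = 2s₂ + s₃`, so that `a + b = 2s`, the left side then collapses through
`C(a, s₃) * (2s₁)! * s₃! = a!`, `C(b, s₃) * (2s₂)! * s₃! = b!` and `C(a + b, a) * a! * b! = (2s)!`,
which is the right side times `2 ^ (s₁ + s₂)`. -/

namespace Nat

/-- At `k = 0` truncated subtraction makes the right side `0‼ * 1 * 1 = 1`. -/
theorem factorial_two_mul_eq_doubleFactorial_mul (k : ℕ) :
    (2 * k)! = (2 * k - 1)‼ * 2 ^ k * k ! := by
  cases k with
  | zero => rfl
  | succ n =>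
    rw [show 2 * (n + 1) = 2 * n + 1 + 1 by ring, factorial_eq_mul_doubleFactorial,
      show 2 * n + 1 + 1 = 2 * (n + 1) by ring, doubleFactorial_two_mul,
      show 2 * (n + 1) - 1 = 2 * n + 1 by omega]
    ring

end Nat

/-- Pairing-count identity:
`C(2s, 2s₁+s₃)·C(2s₁+s₃, s₃)·C(2s₂+s₃, s₃)·(2s₁−1)‼·(2s₂−1)‼·s₃!·(s₁!·s₂!·s₃!)
  = (2s−1)‼·2^{s₃}·s!` where `s = s₁ + s₂ + s₃` (with the convention `(−1)‼ = 1`,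
realized by truncated subtraction: `2·0 − 1 = 0` and `0‼ = 1`). -/
theorem pairing_count_identity (s₁ s₂ s₃ s : ℕ) (hs : s = s₁ + s₂ + s₃) :
    Nat.choose (2 * s) (2 * s₁ + s₃) * Nat.choose (2 * s₁ + s₃) s₃ *
        Nat.choose (2 * s₂ + s₃) s₃ *
        (2 * s₁ - 1)‼ * (2 * s₂ - 1)‼ * s₃ ! * (s₁ ! * s₂ ! * s₃ !)
      = (2 * s - 1)‼ * 2 ^ s₃ * s ! := by
  subst hs
  have hsplit : 2 * (s₁ + s₂ + s₃) = (2 * s₁ + s₃) + (2 * s₂ + s₃) := by ring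
  apply Nat.eq_of_mul_eq_mul_right (pow_pos two_pos (s₁ + s₂))
  calc _ = ((2 * s₁ + s₃) + (2 * s₂ + s₃)).choose (2 * s₁ + s₃) *
          ((2 * s₁ + s₃).choose s₃ * ((2 * s₁ - 1)‼ * 2 ^ s₁ * s₁ !) * s₃ !) *
          ((2 * s₂ + s₃).choose s₃ * ((2 * s₂ - 1)‼ * 2 ^ s₂ * s₂ !) * s₃ !) := by
        rw [← hsplit]; ring
    _ = ((2 * s₁ + s₃) + (2 * s₂ + s₃)).choose (2 * s₁ + s₃) *
          (2 * s₁ + s₃)! * (2 * s₂ + s₃)! := by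
        rw [← factorial_two_mul_eq_doubleFactorial_mul, ← factorial_two_mul_eq_doubleFactorial_mul,
          add_choose_mul_factorial_mul_factorial, add_choose_mul_factorial_mul_factorial, mul_assoc]
    _ = (2 * (s₁ + s₂ + s₃))! := by
        rw [choose_symm_add, add_choose_mul_factorial_mul_factorial, hsplit]
    _ = _ := by rw [factorial_two_mul_eq_doubleFactorial_mul]; ring
end
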